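/- Let q be a prime. Then γ_{S'_{q;1}} = γ − γ_{S_{φ;q}} + 2·log q/(q² − 1), where γ is the Euler–Mascheroni constant, γ_{S_{φ;q}} is the Euler–Kronecker constant of S_{φ;q} = {n ≥ 1 : q ∤ φ(n)} taken with density δ = (q−2)/(q−1), and γ_{S'_{q;1}} is the Euler–Kronecker constant of S'_{q;1} taken with density δ = 1/(q−1). -/

import Mathlib

open Filter Real
open scoped Classical

/-- The Dirichlet series `L_S(s) = ∑_{n ∈ S} n^{-s}` of a set `S` of positive
integers (as a function of a real variable `s`). -/
noncomputable def LSeries' (S : Set ℕ) (s : ℝ) : ℝ :=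
  ∑' n : ℕ, if n ∈ S then (n : ℝ) ^ (-s) else 0

/-- `γS` is the Euler–Kronecker constant of `S` (with density `δ`), i.e.
`L_S'(s)/L_S(s) + δ/(s-1) → γS` as `s → 1⁺`. -/
def IsEulerKronecker (S : Set ℕ) (δ γS : ℝ) : Prop :=
  Tendsto (fun s : ℝ => deriv (LSeries' S) s / LSeries' S s + δ / (s - 1))
    (nhdsWithin 1 (Set.Ioi 1)) (nhds γS)

/-- `S_{φ;q}`: the set of positive integers `n` with `q ∤ φ(n)`. -/
def SPhi (q : ℕ) : Set ℕ := {n : ℕ | 0 < n ∧ ¬ q ∣ Nat.totient n}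

/-- `S'_{q;1}`: the set of positive integers all of whose prime factors are
`≡ 1 (mod q)`. -/
def SOne (q : ℕ) : Set ℕ :=
  {n : ℕ | 0 < n ∧ ∀ p : ℕ, p.Prime → p ∣ n → p % q = 1}

/-! Every `n ≥ 1` with `q² ∤ n` factors uniquely as `n = a * b` with `a ∈ S_{φ;q}` and
`b ∈ S'_{q;1}`: split off the prime factors `≡ 1 (mod q)`, and use that `q ∣ φ(n)` iff `q² ∣ n` or
`n` has a prime factor `≡ 1 (mod q)`. Hence `L_{S_{φ;q}}(s) L_{S'_{q;1}}(s) = ζ(s) (1 - q^{-2s})`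
for `s > 1`. Taking logarithmic derivatives, the two densities add up to the residue `1` of `ζ`,
`ζ'/ζ(s) + 1/(s-1) → γ`, and the local factor contributes `2 log q / (q² - 1)` at `s = 1`. -/

lemma LSeries'_eq_tsum_subtype (S : Set ℕ) (s : ℝ) :
    LSeries' S s = ∑' n : S, (n : ℝ) ^ (-s) := by
  rw [tsum_subtype S fun n : ℕ => (n : ℝ) ^ (-s)]
  rfl

lemma summable_nat_rpow_neg {s : ℝ} (hs : 1 < s) : Summable fun n : ℕ => (n : ℝ) ^ (-s) :=
  Real.summable_nat_rpow.mpr (by linarith)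

lemma LSeries'_pos {S : Set ℕ} (h1 : 1 ∈ S) {s : ℝ} (hs : 1 < s) : 0 < LSeries' S s := by
  rw [LSeries'_eq_tsum_subtype]
  exact ((summable_nat_rpow_neg hs).subtype S).tsum_pos
    (fun _ => Real.rpow_nonneg (Nat.cast_nonneg _) _) ⟨1, h1⟩ (by simp)

lemma LSeries'_union {A B : Set ℕ} (h : Disjoint A B) {s : ℝ} (hs : 1 < s) :
    LSeries' (A ∪ B) s = LSeries' A s + LSeries' B s := by
  simp only [LSeries'_eq_tsum_subtype]
  exact Summable.tsum_union_disjoint h ((summable_nat_rpow_neg hs).subtype A)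
    ((summable_nat_rpow_neg hs).subtype B)

lemma LSeries'_mul_of_bijOn {A B C : Set ℕ}
    (h : Set.BijOn (fun p : ℕ × ℕ => p.1 * p.2) (A ×ˢ B) C) {s : ℝ} (hs : 1 < s) :
    LSeries' A s * LSeries' B s = LSeries' C s := by
  have hA : Summable fun n : A => ((n : ℕ) : ℝ) ^ (-s) := (summable_nat_rpow_neg hs).subtype A
  have hB : Summable fun n : B => ((n : ℕ) : ℝ) ^ (-s) := (summable_nat_rpow_neg hs).subtype B
  simp only [LSeries'_eq_tsum_subtype]
  rw [hA.tsum_mul_tsum hB (hA.mul_of_nonneg hB (fun _ => by positivity) fun _ => by positivity),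
    ← (h.equiv _).tsum_eq, ← (Equiv.Set.prod A B).tsum_eq]
  refine tsum_congr fun p => ?_
  rw [← Real.mul_rpow (Nat.cast_nonneg _) (Nat.cast_nonneg _), ← Nat.cast_mul]
  rfl

lemma LSeries'_singleton (m : ℕ) (s : ℝ) : LSeries' {m} s = (m : ℝ) ^ (-s) := by
  rw [LSeries'_eq_tsum_subtype, tsum_singleton m fun n : ℕ => (n : ℝ) ^ (-s)]

lemma LSeries'_not_dvd {m : ℕ} (hm : 0 < m) {s : ℝ} (hs : 1 < s) :
    LSeries' {n | 0 < n ∧ ¬ m ∣ n} s = LSeries' {n | 0 < n} s * (1 - (m : ℝ) ^ (-s)) := by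
  have hsplit : {n : ℕ | 0 < n} = {n | 0 < n ∧ ¬ m ∣ n} ∪ {n | 0 < n ∧ m ∣ n} := by
    ext n; by_cases h : m ∣ n <;> simp [h]
  have hdisj : Disjoint {n : ℕ | 0 < n ∧ ¬ m ∣ n} {n | 0 < n ∧ m ∣ n} :=
    Set.disjoint_left.2 fun _ h h' => h.2 h'.2
  have hmul : Set.BijOn (fun p : ℕ × ℕ => p.1 * p.2) ({m} ×ˢ {n | 0 < n}) {n | 0 < n ∧ m ∣ n} := by
    refine ⟨?_, ?_, ?_⟩
    · rintro ⟨a, k⟩ ⟨ha, hk⟩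
      obtain rfl : a = m := ha
      exact ⟨Nat.mul_pos hm hk, dvd_mul_right _ _⟩
    · rintro ⟨a, k⟩ ⟨ha, -⟩ ⟨b, l⟩ ⟨hb, -⟩ h
      obtain rfl : a = m := ha
      obtain rfl : b = a := hb
      simpa using Nat.eq_of_mul_eq_mul_left hm h
    · rintro n ⟨hn, k, rfl⟩
      exact ⟨(m, k), ⟨rfl, Nat.pos_of_mul_pos_left hn⟩, rfl⟩
  have := LSeries'_union hdisj hs
  rw [← hsplit, ← LSeries'_mul_of_bijOn hmul hs, LSeries'_singleton] at this
  linarith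

-- `s ≠ 0` makes the real `n = 0` term `0 ^ (-s)` vanish, like the `n = 0` term of `LSeries`.
open Complex in
lemma ofReal_LSeries' (S : Set ℕ) {s : ℝ} (hs : s ≠ 0) :
    (LSeries' S s : ℂ) = LSeries (S.indicator 1) s := by
  rw [LSeries', ofReal_tsum]
  refine tsum_congr fun n => ?_
  rcases eq_or_ne n 0 with rfl | hn
  · simp [hs]
  · by_cases h : n ∈ S <;> simp [h, hn, ofReal_cpow, cpow_neg]

lemma abscissaOfAbsConv_indicator_le_one (S : Set ℕ) :
    LSeries.abscissaOfAbsConv (S.indicator 1) ≤ 1 :=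
  LSeries.abscissaOfAbsConv_le_of_le_const ⟨1, fun n _ => by
    simpa using norm_indicator_le_norm_self (1 : ℕ → ℂ) n⟩

lemma hasDerivAt_LSeries_indicator (S : Set ℕ) {s : ℝ} (hs : 1 < s) :
    HasDerivAt (LSeries (S.indicator 1)) (deriv (LSeries (S.indicator 1)) s) s :=
  (LSeries_hasDerivAt ((abscissaOfAbsConv_indicator_le_one S).trans_lt
    (by exact_mod_cast hs))).differentiableAt.hasDerivAt

lemma eventuallyEq_LSeries' (S : Set ℕ) {s : ℝ} (hs : 1 < s) :
    (fun x : ℝ => (LSeries' S x : ℂ)) =ᶠ[nhds s] fun x : ℝ => LSeries (S.indicator 1) x := by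
  filter_upwards [lt_mem_nhds hs] with x hx using ofReal_LSeries' S (by positivity)

lemma differentiableAt_LSeries' (S : Set ℕ) {s : ℝ} (hs : 1 < s) :
    DifferentiableAt ℝ (LSeries' S) s := by
  refine (hasDerivAt_LSeries_indicator S hs).real_of_complex.differentiableAt
    |>.congr_of_eventuallyEq ?_
  filter_upwards [eventuallyEq_LSeries' S hs] with x hx
  rw [← hx, Complex.ofReal_re]

lemma ofReal_deriv_LSeries' (S : Set ℕ) {s : ℝ} (hs : 1 < s) :
    ((deriv (LSeries' S) s : ℝ) : ℂ) = deriv (LSeries (S.indicator 1)) s :=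
  ((differentiableAt_LSeries' S hs).hasDerivAt.ofReal_comp.congr_of_eventuallyEq
    (eventuallyEq_LSeries' S hs).symm).unique (hasDerivAt_LSeries_indicator S hs).comp_ofReal

lemma LSeries_indicator_pos_eqOn :
    Set.EqOn (LSeries ({n : ℕ | 0 < n}.indicator 1)) riemannZeta {z | 1 < z.re} := fun z hz => by
  rw [← LSeries_one_eq_riemannZeta hz]
  exact LSeries_congr (fun hn => by simp [Nat.pos_of_ne_zero hn]) z

lemma ofReal_LSeries'_pos {s : ℝ} (hs : 1 < s) :
    (LSeries' {n | 0 < n} s : ℂ) = riemannZeta s := by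
  rw [ofReal_LSeries' _ (by positivity), LSeries_indicator_pos_eqOn (by simpa using hs)]

lemma ofReal_deriv_LSeries'_pos {s : ℝ} (hs : 1 < s) :
    ((deriv (LSeries' {n | 0 < n}) s : ℝ) : ℂ) = deriv riemannZeta s := by
  rw [ofReal_deriv_LSeries' _ hs]
  refine Filter.EventuallyEq.deriv_eq ?_
  filter_upwards [(isOpen_lt continuous_const Complex.continuous_re).mem_nhds
    (show 1 < (s : ℂ).re by simpa using hs)] with z hz using LSeries_indicator_pos_eqOn hz

theorem isEulerKronecker_pos :
    IsEulerKronecker {n | 0 < n} 1 eulerMascheroniConstant := by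
  have hζ : Tendsto (fun z => deriv riemannZeta z / riemannZeta z + (z - 1)⁻¹)
      (nhdsWithin 1 {1}ᶜ) (nhds (eulerMascheroniConstant : ℂ)) := by
    simpa using (Asymptotics.isLittleO_one_iff ℂ).1 log_deriv_riemannZeta_add_inv_sub_sub_isLittleO
      |>.add_const (eulerMascheroniConstant : ℂ)
  have hofReal : Tendsto (fun x : ℝ => (x : ℂ)) (nhdsWithin 1 (Set.Ioi 1)) (nhdsWithin 1 {1}ᶜ) :=
    Complex.continuous_ofReal.continuousWithinAt.tendsto_nhdsWithin fun x hx => by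
      simpa using hx.ne'
  rw [IsEulerKronecker, ← tendsto_ofReal_iff]
  refine (hζ.comp hofReal).congr' ?_
  filter_upwards [self_mem_nhdsWithin] with s hs
  simp [ofReal_LSeries'_pos hs, ofReal_deriv_LSeries'_pos hs]

lemma hasDerivAt_one_sub_rpow_neg {m : ℝ} (hm : 0 < m) (x : ℝ) :
    HasDerivAt (fun x : ℝ => 1 - m ^ (-x)) (Real.log m * m ^ (-x)) x := by
  simpa [mul_comm] using ((Real.hasStrictDerivAt_const_rpow hm (-x)).hasDerivAt.comp x
    (hasDerivAt_neg x)).const_sub 1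

lemma tendsto_logDeriv_one_sub_rpow_neg {m : ℝ} (hm : 1 < m) :
    Tendsto (logDeriv fun x : ℝ => 1 - m ^ (-x)) (nhdsWithin 1 (Set.Ioi 1))
      (nhds (Real.log m / (m - 1))) := by
  have hm0 : 0 < m := by linarith
  have hlogDeriv : logDeriv (fun x : ℝ => 1 - m ^ (-x)) =
      fun x : ℝ => Real.log m * m ^ (-x) / (1 - m ^ (-x)) := by
    ext x
    rw [logDeriv_apply, (hasDerivAt_one_sub_rpow_neg hm0 x).deriv]
  have hlim : Real.log m * m ^ (-(1 : ℝ)) / (1 - m ^ (-(1 : ℝ))) = Real.log m / (m - 1) := by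
    rw [Real.rpow_neg_one]
    field_simp
  have hden : 1 - m ^ (-(1 : ℝ)) ≠ 0 := by
    rw [Real.rpow_neg_one]
    exact sub_ne_zero.2 (inv_lt_one_of_one_lt₀ hm).ne'
  rw [hlogDeriv, ← hlim]
  refine ContinuousAt.tendsto ?_ |>.mono_left nhdsWithin_le_nhds
  have hpow : ContinuousAt (fun x : ℝ => m ^ (-x)) 1 :=
    (Real.continuousAt_const_rpow hm0.ne').comp continuous_neg.continuousAt
  exact (continuousAt_const.mul hpow).div (continuousAt_const.sub hpow) hden

theorem IsEulerKronecker.add_eq_of_mul_eq {A B C : Set ℕ} {D : ℝ → ℝ} {δ₁ δ₂ γ₁ γ₂ γ₃ c : ℝ}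
    (hA : IsEulerKronecker A δ₁ γ₁) (hB : IsEulerKronecker B δ₂ γ₂)
    (hC : IsEulerKronecker C (δ₁ + δ₂) γ₃)
    (hD : Tendsto (logDeriv D) (nhdsWithin 1 (Set.Ioi 1)) (nhds c))
    (hmul : ∀ s, 1 < s → LSeries' A s * LSeries' B s = LSeries' C s * D s)
    (hD' : ∀ s, 1 < s → DifferentiableAt ℝ D s) (h1A : 1 ∈ A) (h1B : 1 ∈ B) :
    γ₁ + γ₂ = γ₃ + c := by
  refine tendsto_nhds_unique ((hA.add hB).congr' ?_) (hC.add hD)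
  filter_upwards [self_mem_nhdsWithin] with s (hs : 1 < s)
  have hCD : LSeries' C s * D s ≠ 0 :=
    hmul s hs ▸ (mul_pos (LSeries'_pos h1A hs) (LSeries'_pos h1B hs)).ne'
  have hlog : logDeriv (LSeries' A) s + logDeriv (LSeries' B) s
      = logDeriv (LSeries' C) s + logDeriv D s := by
    rw [← logDeriv_mul s (LSeries'_pos h1A hs).ne' (LSeries'_pos h1B hs).ne'
        (differentiableAt_LSeries' A hs) (differentiableAt_LSeries' B hs),
      ← logDeriv_mul s (left_ne_zero_of_mul hCD) (right_ne_zero_of_mul hCD)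
        (differentiableAt_LSeries' C hs) (hD' s hs)]
    simp only [logDeriv_apply, hmul s hs]
    congr 1
    refine Filter.EventuallyEq.deriv_eq ?_
    filter_upwards [lt_mem_nhds hs] with x hx using hmul x hx
  simp only [logDeriv_apply] at hlog ⊢
  rw [add_div]
  linear_combination hlog

lemma mod_eq_one_iff_dvd_sub_one {p q : ℕ} (hq : 1 < q) (hp : 0 < p) : p % q = 1 ↔ q ∣ p - 1 := by
  rw [← Nat.modEq_iff_dvd' hp, Nat.ModEq, Nat.mod_eq_of_lt hq, eq_comm]

lemma Nat.Prime.dvd_totient_iff {q n : ℕ} (hq : q.Prime) (hn : n ≠ 0) :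
    q ∣ n.totient ↔ q ^ 2 ∣ n ∨ ∃ p, p.Prime ∧ p ∣ n ∧ q ∣ p - 1 := by
  constructor
  · intro h
    rw [Nat.totient_eq_prod_factorization hn, Finsupp.prod] at h
    obtain ⟨p, hp, hpq⟩ := (hq.prime.dvd_finsetProd_iff _).1 h
    rw [Nat.support_factorization] at hp
    have hpp := Nat.prime_of_mem_primeFactors hp
    rcases hq.prime.dvd_mul.1 hpq with hpow | hsub
    · obtain rfl := (Nat.prime_dvd_prime_iff_eq hq hpp).1 (hq.dvd_of_dvd_pow hpow)
      have hk : 2 ≤ n.factorization q := by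
        by_contra! hk
        interval_cases h : n.factorization q <;> simp_all [hq.ne_one]
      exact Or.inl ((pow_dvd_pow q hk).trans (Nat.ordProj_dvd n q))
    · exact Or.inr ⟨p, hpp, Nat.dvd_of_mem_primeFactors hp, hsub⟩
  · rintro (hsq | ⟨p, hp, hpn, hqp⟩)
    · refine dvd_trans ?_ (Nat.totient_dvd_of_dvd hsq)
      simp [Nat.totient_prime_pow hq two_pos]
    · exact (Nat.totient_prime hp ▸ hqp).trans (Nat.totient_dvd_of_dvd hpn)

lemma mem_SPhi_iff {q n : ℕ} (hq : q.Prime) :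
    n ∈ SPhi q ↔ 0 < n ∧ ¬ q ^ 2 ∣ n ∧ ∀ p, p.Prime → p ∣ n → p % q ≠ 1 := by
  refine and_congr_right fun hn => ?_
  rw [hq.dvd_totient_iff hn.ne', not_or, not_exists]
  refine and_congr_right fun _ => forall_congr' fun p => ?_
  simp only [not_and]
  exact forall_congr' fun hp => imp_congr_right fun _ =>
    not_congr (mod_eq_one_iff_dvd_sub_one hq.one_lt hp.pos).symm

lemma one_mem_SPhi {q : ℕ} (hq : q.Prime) : 1 ∈ SPhi q :=
  ⟨one_pos, by simpa using hq.ne_one⟩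

lemma one_mem_SOne (q : ℕ) : 1 ∈ SOne q :=
  ⟨one_pos, fun _ hp h => absurd (Nat.eq_one_of_dvd_one h) hp.ne_one⟩

lemma mul_mem_SOne {q a b : ℕ} (ha : a ∈ SOne q) (hb : b ∈ SOne q) : a * b ∈ SOne q :=
  ⟨Nat.mul_pos ha.1 hb.1, fun p hp hpab => (hp.dvd_mul.1 hpab).elim (ha.2 p hp) (hb.2 p hp)⟩

lemma coprime_of_mem_SPhi_of_mem_SOne {q a b : ℕ} (hq : q.Prime) (ha : a ∈ SPhi q)
    (hb : b ∈ SOne q) : a.Coprime b :=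
  Nat.coprime_of_dvd fun p hp hpa hpb => ((mem_SPhi_iff hq).1 ha).2.2 p hp hpa (hb.2 p hp hpb)

lemma mul_mem_SPhi {q a b : ℕ} (hq : q.Prime) (ha : a ∈ SPhi q) (hb : b ∈ SPhi q)
    (hsq : ¬ q ^ 2 ∣ a * b) : a * b ∈ SPhi q := by
  rw [mem_SPhi_iff hq] at ha hb ⊢
  exact ⟨Nat.mul_pos ha.1 hb.1, hsq, fun p hp hpab =>
    (hp.dvd_mul.1 hpab).elim (ha.2.2 p hp) (hb.2.2 p hp)⟩

lemma exists_mul_eq_of_not_sq_dvd {q : ℕ} (hq : q.Prime) {n : ℕ} (hn : 0 < n) (hsq : ¬ q ^ 2 ∣ n) :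
    ∃ a ∈ SPhi q, ∃ b ∈ SOne q, a * b = n := by
  induction n using Nat.recOnMul with
  | zero => exact absurd hn (lt_irrefl 0)
  | one => exact ⟨1, one_mem_SPhi hq, 1, one_mem_SOne q, rfl⟩
  | prime p hp =>
    have hfactor : ∀ r, r.Prime → r ∣ p → r % q = p % q := fun r hr hrp => by
      rw [(Nat.prime_dvd_prime_iff_eq hr hp).1 hrp]
    by_cases hpq : p % q = 1
    · exact ⟨1, one_mem_SPhi hq, p, ⟨hp.pos, fun r hr hrp => hfactor r hr hrp ▸ hpq⟩, one_mul p⟩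
    · exact ⟨p, (mem_SPhi_iff hq).2 ⟨hp.pos, hsq, fun r hr hrp => hfactor r hr hrp ▸ hpq⟩,
        1, one_mem_SOne q, mul_one p⟩
  | mul x y ihx ihy =>
    obtain ⟨a₁, ha₁, b₁, hb₁, rfl⟩ := ihx (Nat.pos_of_mul_pos_right hn)
      fun h => hsq (h.trans (dvd_mul_right _ _))
    obtain ⟨a₂, ha₂, b₂, hb₂, rfl⟩ := ihy (Nat.pos_of_mul_pos_left hn)
      fun h => hsq (h.trans (dvd_mul_left _ _))
    refine ⟨a₁ * a₂, mul_mem_SPhi hq ha₁ ha₂ fun h => hsq (h.trans ?_), b₁ * b₂,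
      mul_mem_SOne hb₁ hb₂, by ring⟩
    exact ⟨b₁ * b₂, by ring⟩

lemma bijOn_mul_SPhi_SOne {q : ℕ} (hq : q.Prime) :
    Set.BijOn (fun p : ℕ × ℕ => p.1 * p.2) (SPhi q ×ˢ SOne q) {n | 0 < n ∧ ¬ q ^ 2 ∣ n} := by
  refine ⟨?_, ?_, ?_⟩
  · rintro ⟨a, b⟩ ⟨ha, hb⟩
    refine ⟨Nat.mul_pos ha.1 hb.1, fun hdvd => ((mem_SPhi_iff hq).1 ha).2.1 ?_⟩
    have hqb : ¬ q ∣ b := fun h => by simpa using hb.2 q hq h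
    exact (Nat.Coprime.pow_left 2 (hq.coprime_iff_not_dvd.2 hqb)).dvd_of_dvd_mul_right hdvd
  · rintro ⟨a, b⟩ ⟨ha, hb⟩ ⟨a', b'⟩ ⟨ha', hb'⟩ (h : a * b = a' * b')
    have hb'b : b' ∣ b := (coprime_of_mem_SPhi_of_mem_SOne hq ha hb').symm.dvd_of_dvd_mul_left
      (h ▸ dvd_mul_left b' a')
    have hbb' : b ∣ b' := (coprime_of_mem_SPhi_of_mem_SOne hq ha' hb).symm.dvd_of_dvd_mul_left
      (h.symm ▸ dvd_mul_left b a)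
    obtain rfl := Nat.dvd_antisymm hbb' hb'b
    rw [Nat.eq_of_mul_eq_mul_right hb.1 h]
  · rintro n ⟨hn, hsq⟩
    obtain ⟨a, ha, b, hb, rfl⟩ := exists_mul_eq_of_not_sq_dvd hq hn hsq
    exact ⟨(a, b), ⟨ha, hb⟩, rfl⟩

lemma LSeries'_SPhi_mul_LSeries'_SOne {q : ℕ} (hq : q.Prime) {s : ℝ} (hs : 1 < s) :
    LSeries' (SPhi q) s * LSeries' (SOne q) s =
      LSeries' {n | 0 < n} s * (1 - ((q : ℝ) ^ 2) ^ (-s)) := by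
  rw [LSeries'_mul_of_bijOn (bijOn_mul_SPhi_SOne hq) hs, LSeries'_not_dvd (pow_pos hq.pos 2) hs]
  push_cast
  rfl

/-- For a prime `q`, the Euler–Kronecker constants of `S'_{q;1}` (with density
`1/(q-1)`) and of `S_{φ;q}` (with density `(q-2)/(q-1)`) satisfy
`γ_{S'_{q;1}} = γ - γ_{S_{φ;q}} + 2 log q / (q² - 1)`. -/
theorem eulerKronecker_SOne_eq (q : ℕ) (hq : q.Prime) (γphi γone : ℝ)
    (hphi : IsEulerKronecker (SPhi q) (((q : ℝ) - 2) / ((q : ℝ) - 1)) γphi)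
    (hone : IsEulerKronecker (SOne q) (1 / ((q : ℝ) - 1)) γone) :
    γone = Real.eulerMascheroniConstant - γphi +
      2 * Real.log q / ((q : ℝ) ^ 2 - 1) := by
  have hq1 : (1 : ℝ) < q := by exact_mod_cast hq.one_lt
  have hδ : ((q : ℝ) - 2) / ((q : ℝ) - 1) + 1 / ((q : ℝ) - 1) = 1 := by
    field_simp [sub_ne_zero.2 hq1.ne']
    ring
  have hζ : IsEulerKronecker {n | 0 < n} (((q : ℝ) - 2) / ((q : ℝ) - 1) + 1 / ((q : ℝ) - 1))
      eulerMascheroniConstant := by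
    rw [hδ]
    exact isEulerKronecker_pos
  have hsum := hphi.add_eq_of_mul_eq hone hζ
    (tendsto_logDeriv_one_sub_rpow_neg (one_lt_pow₀ hq1 two_ne_zero))
    (fun s hs => LSeries'_SPhi_mul_LSeries'_SOne hq hs)
    (fun s _ => (hasDerivAt_one_sub_rpow_neg (by positivity) s).differentiableAt)
    (one_mem_SPhi hq) (one_mem_SOne q)
  rw [Real.log_pow] at hsum
  push_cast at hsum
  linarith
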